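/- Let I ⊆ C be finite, vI ∈ Seq(I), j ∈ C∖I, and s ∈ {1,…,n}. Then the element [f_{vI}]·f_j lies in U(𝔫)_{I∪{j}} and B_{I∪{j}}(z_s)([f_{vI}]·f_j) = (a(j,s)/(t_j − z_s)) · A_{vI}(t_I) · ∑_{i ∈ I} ( a(i,j)/(t_i − t_j) + a(i,s)/(t_i − z_s) ) in ℂ(t). -/
import Mathlib


/- STATEMENT 4.
Same setting as statement 3.  For a nodup list `vI ∈ Seq(I)`, `j ∈ C ∖ I` and `s`, the
element `[f_{vI}]·f_j` lies in `U(𝔫)_{I∪{j}}` (the span of the monomials `f_{vK}`,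
`vK ∈ Seq(I∪{j})`, realized as permutations of `j :: vI`), and the linear map `B_{I∪{j}}(z_s)`
(determined by `f_{vK} ↦ B_{vK}(t;z_s)`) sends it to
`(a(j,s)/(t_j − z_s)) · A_{vI}(t_I) · ∑_{i∈I} ( a(i,j)/(t_i − t_j) + a(i,s)/(t_i − z_s) )`. -/

noncomputable section

abbrev FF (C : Type) := FractionRing (MvPolynomial C ℂ)

def tv {C : Type} (i : C) : FF C := algebraMap (MvPolynomial C ℂ) (FF C) (MvPolynomial.X i)

def cc {C : Type} (w : ℂ) : FF C := algebraMap (MvPolynomial C ℂ) (FF C) (MvPolynomial.C w)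

/-- `A_{vI}(t_I) = ∏_{p=2}^N ( ∑_{q<p} a(i_p,i_q)/(t_{i_p} − t_{i_q}) )`. -/
def Afun {C : Type} (a : C → C → ℂ) (l : List C) : FF C :=
  ∏ p : Fin l.length, if p.val = 0 then 1 else
    ∑ q : Fin l.length, if q < p then
      cc (a (l.get p) (l.get q)) / (tv (l.get p) - tv (l.get q)) else 0

/-- `B_{vI}(t_I; z_s)`. -/
def Bfun {C : Type} (a : C → C → ℂ) (b : C → ℂ) (z : ℂ) (l : List C) : FF C :=
  ∏ p : Fin l.length,
    (cc (b (l.get p)) / (tv (l.get p) - cc z)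
      + ∑ q : Fin l.length, if q < p then
          cc (a (l.get p) (l.get q)) / (tv (l.get p) - tv (l.get q)) else 0)

def fgen {C : Type} (i : C) : FreeAlgebra ℂ C := FreeAlgebra.ι ℂ i

/-- The monomial `f_{vI} = f_{i_N}·f_{i_{N−1}}⋯f_{i₁}`. -/
def mono {C : Type} (l : List C) : FreeAlgebra ℂ C := (l.reverse.map fgen).prod

def brktRev {C : Type} : List C → FreeAlgebra ℂ C
  | [] => 0
  | [i] => fgen i
  | i :: tl => ⁅fgen i, brktRev tl⁆

/-- `[f_{vI}] = ad(f_{i_N})∘⋯∘ad(f_{i₂})(f_{i₁})`, inside `U(𝔫)` (bracket = commutator). -/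
def brkt {C : Type} (l : List C) : FreeAlgebra ℂ C := brktRev l.reverse

def Bg {C : Type} (a : C → C → ℂ) (β : C → FF C) : List C → FF C
  | [] => 1
  | k :: w => β k * Bg a (fun i => β i + cc (a i k) / (tv i - tv k)) w

lemma prod_eq_Bg {C : Type} (a : C → C → ℂ) (l : List C) : ∀ (β : C → FF C),
    (∏ p : Fin l.length, (β (l.get p) + ∑ q : Fin l.length, if q < p then
      cc (a (l.get p) (l.get q)) / (tv (l.get p) - tv (l.get q)) else 0)) = Bg a β l := by
  induction l with
  | nil => intro β; simp [Bg]
  | cons x w ih =>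
    intro β
    rw [Bg, ← ih]
    simp only [List.length_cons, Fin.prod_univ_succ, Fin.sum_univ_succ]
    congr 1
    · simp
    · apply Finset.prod_congr rfl
      intro p _
      simp [Fin.succ_lt_succ_iff, Fin.succ_pos, add_assoc]

lemma Bfun_eq_Bg {C : Type} (a : C → C → ℂ) (b : C → ℂ) (z : ℂ) (l : List C) :
    Bfun a b z l = Bg a (fun i => cc (b i) / (tv i - cc z)) l := by
  rw [Bfun, ← prod_eq_Bg]

def AL {C : Type} (a : C → C → ℂ) : List C → FF C
  | [] => 1
  | x :: w => Bg a (fun i => cc (a i x) / (tv i - tv x)) w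

lemma Afun_eq_AL {C : Type} (a : C → C → ℂ) (l : List C) : Afun a l = AL a l := by
  cases l with
  | nil => simp [Afun, AL]
  | cons x w =>
    rw [AL, ← prod_eq_Bg, Afun]
    simp only [List.length_cons, Fin.prod_univ_succ, Fin.sum_univ_succ]
    simp [Fin.succ_lt_succ_iff, Fin.succ_pos]

lemma list_sum_add {C : Type} (f g : C → FF C) (l : List C) :
    (l.map (fun i => f i + g i)).sum = (l.map f).sum + (l.map g).sum := by
  induction l with
  | nil => simp
  | cons x w ih => simp [ih]; ring

lemma Bg_append {C : Type} (a : C → C → ℂ) (k : C) (l : List C) : ∀ β : C → FF C,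
    Bg a β (l ++ [k]) = Bg a β l
      * (β k + (l.map (fun i => cc (a k i) / (tv k - tv i))).sum) := by
  induction l with
  | nil => intro β; simp [Bg]
  | cons x w ih =>
    intro β
    rw [List.cons_append, Bg, Bg, ih]
    simp only [List.map_cons, List.sum_cons]
    ring

lemma AL_append {C : Type} (a : C → C → ℂ) (k : C) (l : List C) (hl : l ≠ []) :
    AL a (l ++ [k]) = AL a l * (l.map (fun i => cc (a k i) / (tv k - tv i))).sum := by
  obtain ⟨x, m, rfl⟩ := List.exists_cons_of_ne_nil hl
  rw [List.cons_append, AL, AL, Bg_append]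
  simp only [List.map_cons, List.sum_cons]

lemma mono_append {C : Type} (w : List C) (k : C) : mono (w ++ [k]) = fgen k * mono w := by
  simp [mono, List.reverse_append]

lemma mono_cons {C : Type} (w : List C) (k : C) : mono (k :: w) = mono w * fgen k := by
  simp [mono, List.reverse_cons]

lemma brkt_nil {C : Type} : brkt ([] : List C) = 0 := rfl

lemma brkt_single {C : Type} (k : C) : brkt [k] = fgen k := rfl

lemma mono_single {C : Type} (k : C) : mono [k] = fgen k := by simp [mono]

lemma brkt_append {C : Type} (l : List C) (k : C) (hl : l ≠ []) :
    brkt (l ++ [k]) = fgen k * brkt l - brkt l * fgen k := by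
  obtain ⟨x, m, hx⟩ := List.exists_cons_of_ne_nil (fun h => hl (List.reverse_eq_nil_iff.mp h) : l.reverse ≠ [])
  rw [brkt, brkt, List.reverse_append, List.reverse_singleton, List.singleton_append, hx]
  rw [show brktRev (k :: x :: m) = ⁅fgen k, brktRev (x :: m)⁆ from rfl, Ring.lie_def]

lemma brkt_mem_span {C : Type} (l : List C) :
    brkt l ∈ Submodule.span ℂ (mono '' {w | w ∈ l.permutations}) := by
  induction l using List.reverseRecOn with
  | nil => simp [brkt_nil]
  | append_singleton l k ih =>
    by_cases hl : l = []
    · subst hl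
      simp only [List.nil_append]
      rw [brkt_single, ← mono_single k]
      exact Submodule.subset_span ⟨[k], by simp [List.mem_permutations], rfl⟩
    · rw [brkt_append l k hl]
      set L : FreeAlgebra ℂ C →ₗ[ℂ] FreeAlgebra ℂ C :=
        LinearMap.mulLeft ℂ (fgen k) - LinearMap.mulRight ℂ (fgen k) with hL
      have : fgen k * brkt l - brkt l * fgen k = L (brkt l) := by
        simp [hL, LinearMap.mulLeft_apply, LinearMap.mulRight_apply]
      rw [this]
      have hle : Submodule.span ℂ (mono '' {w | w ∈ l.permutations}) ≤
          (Submodule.span ℂ (mono '' {w | w ∈ (l ++ [k]).permutations})).comap L := by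
        rw [Submodule.span_le]
        rintro _ ⟨w, hw, rfl⟩
        simp only [Set.mem_setOf_eq, List.mem_permutations] at hw
        simp only [SetLike.mem_coe, Submodule.mem_comap, hL, LinearMap.sub_apply,
          LinearMap.mulLeft_apply, LinearMap.mulRight_apply]
        apply sub_mem
        · rw [← mono_append]
          exact Submodule.subset_span ⟨w ++ [k], by
            simp only [Set.mem_setOf_eq, List.mem_permutations]
            exact hw.append_right [k], rfl⟩
        · rw [← mono_cons]
          exact Submodule.subset_span ⟨k :: w, by
            simp only [Set.mem_setOf_eq, List.mem_permutations]
            exact ((hw.cons k).trans (List.perm_append_singleton k l).symm), rfl⟩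
      exact hle ih

lemma list_sum_neg {C : Type} (f : C → FF C) (l : List C) :
    (l.map (fun i => -f i)).sum = -(l.map f).sum := by
  induction l with
  | nil => simp
  | cons x w ih => simp [ih]; ring

lemma main_lemma {C : Type} (a : C → C → ℂ) (ha : ∀ i j, a i j = a j i) (l : List C) :
    ∀ (β : C → FF C) (c : FF C) (φ : FreeAlgebra ℂ C →ₗ[ℂ] FF C),
      (∀ w : List C, w.Perm l → φ (mono w) = c * Bg a β w) →
      φ (brkt l) = c * (AL a l * (l.map β).sum) := by
  induction l using List.reverseRecOn with
  | nil => intro β c φ hφ; simp [brkt_nil, AL]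
  | append_singleton l k ih =>
    intro β c φ hφ
    by_cases hl : l = []
    · subst hl
      simp only [List.nil_append]
      rw [brkt_single, ← mono_single k, hφ [k] (List.Perm.refl _)]
      simp [Bg, AL]
    · rw [brkt_append l k hl, map_sub]
      obtain ⟨S, hS⟩ : ∃ x : FF C, (l.map (fun i => cc (a k i) / (tv k - tv i))).sum = x := ⟨_, rfl⟩
      obtain ⟨T, hT⟩ : ∃ x : FF C, (l.map β).sum = x := ⟨_, rfl⟩
      have h1 : φ (fgen k * brkt l) = (c * (β k + S)) * (AL a l * T) := by
        have key := ih β (c * (β k + S)) (φ ∘ₗ LinearMap.mulLeft ℂ (fgen k)) ?_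
        · rw [hT] at key; simpa using key
        · intro w hw
          have h0 : (φ ∘ₗ LinearMap.mulLeft ℂ (fgen k)) (mono w) = φ (mono (w ++ [k])) := by
            simp [mono_append]
          rw [h0, hφ (w ++ [k]) (hw.append_right [k]), Bg_append]
          have hsum : (w.map (fun i => cc (a k i) / (tv k - tv i))).sum = S := by
            rw [← hS]; exact (hw.map _).sum_eq
          rw [hsum]; ring
      have h2 : φ (brkt l * fgen k)
          = (c * β k) * (AL a l * (l.map (fun i => β i + cc (a i k) / (tv i - tv k))).sum) := by
        have key := ih (fun i => β i + cc (a i k) / (tv i - tv k)) (c * β k)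
          (φ ∘ₗ LinearMap.mulRight ℂ (fgen k)) ?_
        · simpa using key
        · intro w hw
          have h0 : (φ ∘ₗ LinearMap.mulRight ℂ (fgen k)) (mono w) = φ (mono (k :: w)) := by
            simp [mono_cons]
          rw [h0, hφ (k :: w) ((hw.cons k).trans (List.perm_append_singleton k l).symm), Bg]
          ring
      have hpt : ∀ i : C, cc (a i k) / (tv i - tv k) = -(cc (a k i) / (tv k - tv i)) := by
        intro i
        rw [ha i k, ← neg_sub (tv k) (tv i)]
        exact div_neg (cc (a k i) : FF C)
      have hneg : (l.map (fun i => β i + cc (a i k) / (tv i - tv k))).sum = T - S := by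
        rw [list_sum_add]
        have h3 : (l.map (fun i => cc (a i k) / (tv i - tv k))).sum = -S := by
          rw [← hS]
          simp only [hpt]
          exact list_sum_neg _ l
        rw [h3, hT]; ring
      rw [hneg] at h2
      rw [h1, h2, AL_append a k l hl, hS, List.map_append, List.sum_append, hT]
      simp only [List.map_cons, List.map_nil, List.sum_cons, List.sum_nil]
      ring

theorem statement4 {C : Type} [Fintype C] [DecidableEq C]
    (n : ℕ) (hn : 1 ≤ n) (z : Fin n → ℂ) (hz : Function.Injective z)
    (a : C → C → ℂ) (ha : ∀ i j, a i j = a j i) (b : C → Fin n → ℂ)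
    (vI : List C) (hnd : vI.Nodup) (j : C) (hj : j ∉ vI.toFinset) (s : Fin n) :
    brkt vI * fgen j ∈ Submodule.span ℂ (mono '' {l | l ∈ (j :: vI).permutations}) ∧
      ∀ φ : FreeAlgebra ℂ C →ₗ[ℂ] FF C,
        (∀ vK ∈ (j :: vI).permutations.toFinset,
            φ (mono vK) = Bfun a (fun i => b i s) (z s) vK) →
        φ (brkt vI * fgen j)
          = cc (b j s) / (tv j - cc (z s)) * Afun a vI
              * ∑ i ∈ vI.toFinset,
                  (cc (a i j) / (tv i - tv j) + cc (b i s) / (tv i - cc (z s))) := by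
  constructor
  · have hle : Submodule.span ℂ (mono '' {w | w ∈ vI.permutations}) ≤
        (Submodule.span ℂ (mono '' {l | l ∈ (j :: vI).permutations})).comap
          (LinearMap.mulRight ℂ (fgen j)) := by
      rw [Submodule.span_le]
      rintro _ ⟨w, hw, rfl⟩
      simp only [Set.mem_setOf_eq, List.mem_permutations] at hw
      simp only [SetLike.mem_coe, Submodule.mem_comap, LinearMap.mulRight_apply]
      rw [← mono_cons]
      exact Submodule.subset_span ⟨j :: w, by
        simp only [Set.mem_setOf_eq, List.mem_permutations]
        exact hw.cons j, rfl⟩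
    exact hle (brkt_mem_span vI)
  · intro φ hφ
    have hfe : (fun i => (cc (b i s) / (tv i - cc (z s)) : FF C) + cc (a i j) / (tv i - tv j))
        = fun i => cc (a i j) / (tv i - tv j) + cc (b i s) / (tv i - cc (z s)) := by
      funext i; ring
    have hmain := main_lemma a ha vI
      (fun i => cc (a i j) / (tv i - tv j) + cc (b i s) / (tv i - cc (z s)))
      (cc (b j s) / (tv j - cc (z s))) (φ ∘ₗ LinearMap.mulRight ℂ (fgen j)) ?_
    · have h0 : (φ ∘ₗ LinearMap.mulRight ℂ (fgen j)) (brkt vI) = φ (brkt vI * fgen j) := by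
        simp
      rw [h0] at hmain
      rw [hmain, Afun_eq_AL, List.sum_toFinset _ hnd]
      ring
    · intro w hw
      have h0 : (φ ∘ₗ LinearMap.mulRight ℂ (fgen j)) (mono w) = φ (mono (j :: w)) := by
        simp [mono_cons]
      rw [h0, hφ (j :: w) (by
        rw [List.mem_toFinset, List.mem_permutations]
        exact hw.cons j), Bfun_eq_Bg, Bg, hfe]

end
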